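/- Fix λ > 0, α ∈ [0,1], t > 0. Let p(t; y, ξ) be the transition density of skew bang-bang Brownian motion given by formulas (TDF1)–(TDF3), and p_∞ the stationary density p_∞(ξ) = 2αλ e^{-2λξ}1_{ξ>0} + 2(1-α)λ e^{2λξ}1_{ξ≤0}. Then the detailed-balance (duality) relation p(t; y, ξ)·p_∞(y) = p(t; ξ, y)·p_∞(ξ) holds for all y, ξ ∈ ℝ with y ≠ 0 and ξ ≠ 0. -/

import Mathlib

/-!
Apart from the drifted Gaussian `φ_t(ξ - y + λt)`, every term of `p(t; y, ξ) p_∞(y)` is already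
symmetric in `(y, ξ)`: for `y`, `ξ` of opposite signs both sides equal
`4α(1-α)λ e^{-2λ(|y|+|ξ|)} (φ_t(|y|+|ξ|-λt) + λ ∫_{|y|+|ξ|}^∞ φ_t(u-λt) du)`, and on a half-line
the terms in `ξ + y` pick up a factor `e^{∓2λ(ξ+y)}` from `p_∞`. The drifted Gaussian is
exchanged by completing the square: `e^{-2λb} φ_t(a - b + λt) = e^{-2λa} φ_t(b - a + λt)`.
-/

open Real MeasureTheory

/-- Left-continuous signum: `1` for positive arguments, `-1` otherwise. -/
noncomputable def sgnL (x : ℝ) : ℝ := if 0 < x then 1 else -1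

/-- Gaussian kernel `φ_t(x) = (2πt)^{-1/2} e^{-x²/(2t)}`. -/
noncomputable def phi (t x : ℝ) : ℝ :=
  1 / Real.sqrt (2 * Real.pi * t) * Real.exp (-x ^ 2 / (2 * t))

/-- The transition density of skew bang-bang Brownian motion, formulas
(TDF1)-(TDF3). -/
noncomputable def pTrans (lam α t y ξ : ℝ) : ℝ :=
  if 0 < ξ ∧ 0 < y then
    (2 * α - 1) * Real.exp (-(2 * lam * ξ)) * phi t (ξ + y - lam * t) +
      phi t (ξ - y + lam * t) +
      2 * α * lam * Real.exp (-(2 * lam * ξ)) *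
        ∫ u in Set.Ioi (ξ + y), phi t (u - lam * t)
  else if ξ < 0 ∧ y < 0 then
    (1 - 2 * α) * Real.exp (2 * lam * ξ) * phi t (-ξ - y - lam * t) +
      phi t (-ξ + y + lam * t) +
      2 * (1 - α) * lam * Real.exp (2 * lam * ξ) *
        ∫ u in Set.Ioi (-ξ - y), phi t (u - lam * t)
  else
    (1 + (2 * α - 1) * sgnL ξ) * Real.exp (-(2 * lam * |ξ|)) *
      (phi t (|ξ| + |y| - lam * t) +
        lam * ∫ u in Set.Ioi (|ξ| + |y|), phi t (u - lam * t))

/-- The stationary double-exponential density. -/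
noncomputable def pinf (lam α ξ : ℝ) : ℝ :=
  if 0 < ξ then 2 * α * lam * Real.exp (-(2 * lam * ξ))
  else 2 * (1 - α) * lam * Real.exp (2 * lam * ξ)

lemma phi_neg (t x : ℝ) : phi t (-x) = phi t x := by
  simp only [phi, even_two.neg_pow]

lemma exp_mul_phi_drift_comm (lam t a b : ℝ) (ht : 0 < t) :
    exp (-(2 * lam * b)) * phi t (a - b + lam * t) =
      exp (-(2 * lam * a)) * phi t (b - a + lam * t) := by
  have hexponent : -(2 * lam * b) + -(a - b + lam * t) ^ 2 / (2 * t) =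
      -(2 * lam * a) + -(b - a + lam * t) ^ 2 / (2 * t) := by
    field_simp
    ring
  simp only [phi]
  rw [mul_left_comm, ← exp_add, hexponent, exp_add, mul_left_comm]

section DetailedBalance

variable {lam α t y ξ : ℝ}

lemma pTrans_mul_pinf_comm_of_pos (ht : 0 < t) (hy : 0 < y) (hξ : 0 < ξ) :
    pTrans lam α t y ξ * pinf lam α y = pTrans lam α t ξ y * pinf lam α ξ := by
  simp only [pTrans, pinf, if_pos (And.intro hξ hy), if_pos (And.intro hy hξ), if_pos hy,
    if_pos hξ, add_comm ξ y]
  linear_combination (2 * α * lam) * exp_mul_phi_drift_comm lam t ξ y ht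

lemma pTrans_mul_pinf_comm_of_neg (ht : 0 < t) (hy : y < 0) (hξ : ξ < 0) :
    pTrans lam α t y ξ * pinf lam α y = pTrans lam α t ξ y * pinf lam α ξ := by
  have hdrift : exp (2 * lam * y) * phi t (-ξ + y + lam * t) =
      exp (2 * lam * ξ) * phi t (-y + ξ + lam * t) := by
    rw [← phi_neg t (-ξ + y + lam * t), ← phi_neg t (-y + ξ + lam * t)]
    convert exp_mul_phi_drift_comm (-lam) t ξ y ht using 3 <;> ring_nf
  simp only [pTrans, pinf, if_neg (fun h : 0 < ξ ∧ 0 < y ↦ hξ.not_gt h.1),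
    if_neg (fun h : 0 < y ∧ 0 < ξ ↦ hy.not_gt h.1), if_pos (And.intro hξ hy),
    if_pos (And.intro hy hξ), if_neg hy.not_gt, if_neg hξ.not_gt, neg_sub_comm ξ y]
  linear_combination (2 * (1 - α) * lam) * hdrift

lemma pTrans_mul_pinf_comm_of_neg_of_pos (hy : y < 0) (hξ : 0 < ξ) :
    pTrans lam α t y ξ * pinf lam α y = pTrans lam α t ξ y * pinf lam α ξ := by
  simp only [pTrans, pinf, sgnL, if_neg (fun h : 0 < ξ ∧ 0 < y ↦ hy.not_gt h.2),
    if_neg (fun h : 0 < y ∧ 0 < ξ ↦ hy.not_gt h.1),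
    if_neg (fun h : ξ < 0 ∧ y < 0 ↦ hξ.not_gt h.1),
    if_neg (fun h : y < 0 ∧ ξ < 0 ↦ hξ.not_gt h.2), if_pos hξ, if_neg hy.not_gt,
    abs_of_pos hξ, abs_of_neg hy, add_comm ξ (-y), mul_neg, neg_neg]
  ring

end DetailedBalance

theorem stmt_13_general (lam α t : ℝ) (ht : 0 < t) :
    ∀ y ξ : ℝ, y ≠ 0 → ξ ≠ 0 →
      pTrans lam α t y ξ * pinf lam α y = pTrans lam α t ξ y * pinf lam α ξ := by
  intro y ξ hy hξ
  rcases hy.lt_or_gt with hy | hy <;> rcases hξ.lt_or_gt with hξ | hξ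
  · exact pTrans_mul_pinf_comm_of_neg ht hy hξ
  · exact pTrans_mul_pinf_comm_of_neg_of_pos hy hξ
  · exact (pTrans_mul_pinf_comm_of_neg_of_pos hξ hy).symm
  · exact pTrans_mul_pinf_comm_of_pos ht hy hξ

/-- Detailed-balance (duality) relation for the skew bang-bang Brownian motion:
`p(t; y, ξ)·p_∞(y) = p(t; ξ, y)·p_∞(ξ)` for all `y ≠ 0`, `ξ ≠ 0`. -/
theorem stmt_13 (lam α t : ℝ) (hlam : 0 < lam) (hα : α ∈ Set.Icc (0 : ℝ) 1)
    (ht : 0 < t) :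
    ∀ y ξ : ℝ, y ≠ 0 → ξ ≠ 0 →
      pTrans lam α t y ξ * pinf lam α y = pTrans lam α t ξ y * pinf lam α ξ :=
  stmt_13_general lam α t ht
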